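/- arXiv:2406.00269 — 3 statements merged into one kernel-verified Lean document; each statement's English description precedes it below -/
import Mathlib

section
/- Let X be a Hausdorff topological vector space and (x_n) a linearly independent sequence in X. Then there exist positive reals λ_n such that (λ_n x_n) is ℓ∞-independent, i.e., for every bounded scalar sequence (c_n), if the series ∑ c_n λ_n x_n converges to 0 then c_n = 0 for all n. -/
open Filter Topology

/-- A bounded real sequence (an element of ℓ∞). -/
def BddSeq (c : ℕ → ℝ) : Prop := ∃ M : ℝ, ∀ n, |c n| ≤ M

/-- The series ∑ₙ f n converges to x: the partial sums tend to x. -/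
def SeriesConvTo {X : Type*} [AddCommMonoid X] [TopologicalSpace X] (f : ℕ → X) (x : X) :
    Prop :=
  Filter.Tendsto (fun N => ∑ n ∈ Finset.range N, f n) Filter.atTop (nhds x)

/-- A sequence (u n) is ℓ∞-independent: for every bounded scalar sequence (c n),
if ∑ c n • u n converges to 0 then all c n = 0. -/
def LinftyIndep {X : Type*} [AddCommGroup X] [Module ℝ X] [TopologicalSpace X]
    (u : ℕ → X) : Prop :=
  ∀ c : ℕ → ℝ, BddSeq c → SeriesConvTo (fun n => c n • u n) 0 → ∀ n, c n = 0

namespace Stmt0Aux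

open Set Pointwise

variable {X : Type*} [AddCommGroup X] [Module ℝ X] [TopologicalSpace X]
  [IsTopologicalAddGroup X] [ContinuousSMul ℝ X] [T2Space X]

/-- The compact "box" of combinations `∑_{k<j≤n} (b j * lp j) • x j` with `|b j| ≤ 1`. -/
def Bset (x : ℕ → X) (k n : ℕ) (lp : ℕ → ℝ) : Set X :=
  (fun b : ℕ → ℝ => ∑ j ∈ Finset.Ioc k n, (b j * lp j) • x j) '' {b | ∀ j, |b j| ≤ 1}

/-- A compact piece of the punctured line through `x k`. -/
def Cset (x : ℕ → X) (k m : ℕ) : Set X :=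
  (fun t : ℝ => t • x k) '' {t : ℝ | 1 / ((m : ℝ) + 1) ≤ |t| ∧ |t| ≤ (m : ℝ) + 1}

lemma Bset_congr (x : ℕ → X) (k n : ℕ) {lp lp' : ℕ → ℝ}
    (h : ∀ j ∈ Finset.Ioc k n, lp j = lp' j) : Bset x k n lp = Bset x k n lp' := by
  unfold Bset
  apply Set.image_congr
  intro b _
  exact Finset.sum_congr rfl fun j hj => by rw [h j hj]

lemma isCompact_Bset (x : ℕ → X) (k n : ℕ) (lp : ℕ → ℝ) : IsCompact (Bset x k n lp) := by
  have hc : IsCompact {b : ℕ → ℝ | ∀ j, |b j| ≤ 1} := by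
    have he : {b : ℕ → ℝ | ∀ j, |b j| ≤ 1} = Set.pi Set.univ (fun _ => Set.Icc (-1 : ℝ) 1) := by
      ext b
      simp only [Set.mem_setOf_eq, Set.mem_univ_pi, Set.mem_Icc, abs_le]
    rw [he]
    exact isCompact_univ_pi fun _ => isCompact_Icc
  apply hc.image
  apply continuous_finset_sum
  intro j _
  exact ((continuous_apply j).mul continuous_const).smul continuous_const

lemma isCompact_Cset (x : ℕ → X) (k m : ℕ) : IsCompact (Cset x k m) := by
  have hc : IsCompact {t : ℝ | 1 / ((m : ℝ) + 1) ≤ |t| ∧ |t| ≤ (m : ℝ) + 1} := by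
    apply IsCompact.of_isClosed_subset (isCompact_Icc (a := -((m : ℝ) + 1)) (b := (m : ℝ) + 1))
    · have : {t : ℝ | 1 / ((m : ℝ) + 1) ≤ |t| ∧ |t| ≤ (m : ℝ) + 1}
          = {t : ℝ | 1 / ((m : ℝ) + 1) ≤ |t|} ∩ {t : ℝ | |t| ≤ (m : ℝ) + 1} := rfl
      rw [this]
      exact (isClosed_le continuous_const continuous_abs).inter
        (isClosed_le continuous_abs continuous_const)
    · intro t ht
      exact abs_le.1 ht.2
  exact hc.image (continuous_id.smul continuous_const)

lemma Bset_Cset_disj (x : ℕ → X) (hx : LinearIndependent ℝ x) (k n m : ℕ) (lp : ℕ → ℝ) :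
    ∀ y, y ∈ Bset x k n lp → y ∉ Cset x k m := by
  rintro y ⟨b, _hb, rfl⟩ ⟨t, ⟨ht1, _ht2⟩, hty⟩
  have htpos : (0 : ℝ) < 1 / ((m : ℝ) + 1) := by positivity
  have ht0 : t ≠ 0 := by
    intro h; rw [h, abs_zero] at ht1; linarith
  have hknot : k ∉ Finset.Ioc k n := by simp
  set g : ℕ → ℝ := fun j => if j = k then t else -(b j * lp j) with hg
  have key := linearIndependent_iff'.1 hx (insert k (Finset.Ioc k n))
      g ?_ k (Finset.mem_insert_self _ _)
  · have key' : t = 0 := by simpa [hg] using key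
    exact ht0 key'
  · rw [Finset.sum_insert hknot]
    have hgk : g k = t := by simp [hg]
    have hsum : ∑ j ∈ Finset.Ioc k n, g j • x j
        = -∑ j ∈ Finset.Ioc k n, (b j * lp j) • x j := by
      rw [← Finset.sum_neg_distrib]
      refine Finset.sum_congr rfl fun j hj => ?_
      have hjk : j ≠ k := by
        rcases Finset.mem_Ioc.1 hj with ⟨h1, _⟩; omega
      simp [hg, hjk]
    have hty' : t • x k = ∑ j ∈ Finset.Ioc k n, (b j * lp j) • x j := hty
    rw [hgk, hsum, hty']
    simp

/-- One step of the recursive construction. -/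
lemma exStep (x : ℕ → X) (hx : LinearIndependent ℝ x) (n : ℕ) (Vp : Set X) (lp : ℕ → ℝ) :
    ∃ q : Set X × ℝ, Vp ∈ 𝓝 (0 : X) →
      (q.1 ∈ 𝓝 (0 : X) ∧ Balanced ℝ q.1 ∧ q.1 + q.1 ⊆ Vp ∧ 0 < q.2 ∧
        q.2 • x (n + 1) ∈ q.1 ∧
        Bset x n.unpair.1 n lp + q.1 + q.1 + q.1 ⊆ (Cset x n.unpair.1 n.unpair.2)ᶜ) := by
  by_cases hVp : Vp ∈ 𝓝 (0 : X)
  · have hB := isCompact_Bset x n.unpair.1 n lp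
    have hC := isCompact_Cset x n.unpair.1 n.unpair.2
    have hCc : IsClosed (Cset x n.unpair.1 n.unpair.2) := hC.isClosed
    have hdisj : Bset x n.unpair.1 n lp ⊆ (Cset x n.unpair.1 n.unpair.2)ᶜ :=
      fun y hy => Bset_Cset_disj x hx _ _ _ _ y hy
    obtain ⟨V₁, hV₁, hBV₁⟩ := compact_open_separated_add_right hB hCc.isOpen_compl hdisj
    obtain ⟨U₁, hU₁, hU₁V⟩ := exists_nhds_zero_half hV₁
    obtain ⟨U₂, hU₂, hU₂V⟩ := exists_nhds_zero_half hU₁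
    obtain ⟨U₃, hU₃, hU₃V⟩ := exists_nhds_zero_half hVp
    obtain ⟨V, ⟨hVmem, hVbal⟩, hVsub⟩ :=
      (nhds_basis_balanced ℝ X).mem_iff.1 (Filter.inter_mem hU₂ hU₃)
    have hVU₂ : V ⊆ U₂ := fun y hy => (hVsub hy).1
    have hVU₃ : V ⊆ U₃ := fun y hy => (hVsub hy).2
    have h0U₂ : (0 : X) ∈ U₂ := mem_of_mem_nhds hU₂
    -- find a positive scalar
    have hcont : Filter.Tendsto (fun t : ℝ => t • x (n + 1)) (𝓝 0) (𝓝 (0 : X)) := by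
      have hc : Continuous fun t : ℝ => t • x (n + 1) :=
        continuous_id.smul continuous_const
      simpa using hc.tendsto 0
    have hev : ∀ᶠ t : ℝ in 𝓝 0, t • x (n + 1) ∈ V := hcont.eventually_mem hVmem
    obtain ⟨ε, hε, hball⟩ := Metric.eventually_nhds_iff.1 hev
    refine ⟨(V, ε / 2), fun _ => ⟨hVmem, hVbal, ?_, by positivity, ?_, ?_⟩⟩
    · rintro y ⟨a2, ha2, b2, hb2, rfl⟩
      exact hU₃V a2 (hVU₃ ha2) b2 (hVU₃ hb2)
    · apply hball
      rw [Real.dist_eq, sub_zero, abs_of_pos (by positivity)]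
      linarith
    · -- B + V + V + V ⊆ Cᶜ
      have hVVV : V + V + V ⊆ V₁ := by
        rintro y ⟨ab, ⟨a1, ha1, a2, ha2, rfl⟩, c2, hc2, rfl⟩
        have h12 : a1 + a2 ∈ U₁ := hU₂V a1 (hVU₂ ha1) a2 (hVU₂ ha2)
        have hcU : c2 ∈ U₁ := by
          have := hU₂V c2 (hVU₂ hc2) 0 h0U₂
          simpa using this
        exact hU₁V _ h12 _ hcU
      intro y hy
      apply hBV₁
      have : Bset x n.unpair.1 n lp + V + V + V ⊆ Bset x n.unpair.1 n lp + (V + V + V) := by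
        rw [add_assoc, add_assoc, add_assoc]
      have hy' := this hy
      rcases hy' with ⟨a, ha, b, hb, rfl⟩
      exact Set.add_mem_add ha (hVVV hb)
  · exact ⟨(Set.univ, 1), fun h => absurd h hVp⟩

/-- The recursively chosen neighborhoods and scalars. -/
noncomputable def seqG (x : ℕ → X) (hx : LinearIndependent ℝ x) : ℕ → Set X × (ℕ → ℝ) :=
  fun n => Nat.rec ((Set.univ : Set X), fun _ => (1 : ℝ))
    (fun n p =>
      ((Classical.choose (exStep x hx n p.1 p.2)).1,
        Function.update p.2 (n + 1) (Classical.choose (exStep x hx n p.1 p.2)).2)) n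

noncomputable def Vn (x : ℕ → X) (hx : LinearIndependent ℝ x) (n : ℕ) : Set X :=
  (seqG x hx n).1

noncomputable def lfun (x : ℕ → X) (hx : LinearIndependent ℝ x) (n : ℕ) : ℝ :=
  (seqG x hx n).2 n

lemma Vn_mem_bal (x : ℕ → X) (hx : LinearIndependent ℝ x) :
    ∀ n, Vn x hx n ∈ 𝓝 (0 : X) ∧ Balanced ℝ (Vn x hx n) := by
  intro n
  induction n with
  | zero => exact ⟨Filter.univ_mem, balanced_univ⟩
  | succ n ih =>
    have h := Classical.choose_spec (exStep x hx n (seqG x hx n).1 (seqG x hx n).2) ih.1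
    exact ⟨h.1, h.2.1⟩

lemma seqG_step (x : ℕ → X) (hx : LinearIndependent ℝ x) (n : ℕ) :
    Vn x hx (n + 1) + Vn x hx (n + 1) ⊆ Vn x hx n ∧
    0 < (Classical.choose (exStep x hx n (seqG x hx n).1 (seqG x hx n).2)).2 ∧
    (Classical.choose (exStep x hx n (seqG x hx n).1 (seqG x hx n).2)).2 • x (n + 1)
      ∈ Vn x hx (n + 1) ∧
    Bset x n.unpair.1 n ((seqG x hx n).2) + Vn x hx (n + 1) + Vn x hx (n + 1) + Vn x hx (n + 1)
      ⊆ (Cset x n.unpair.1 n.unpair.2)ᶜ := by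
  have h := Classical.choose_spec (exStep x hx n (seqG x hx n).1 (seqG x hx n).2)
    (Vn_mem_bal x hx n).1
  exact ⟨h.2.2.1, h.2.2.2.1, h.2.2.2.2.1, h.2.2.2.2.2⟩

lemma lfun_succ (x : ℕ → X) (hx : LinearIndependent ℝ x) (n : ℕ) :
    lfun x hx (n + 1) = (Classical.choose (exStep x hx n (seqG x hx n).1 (seqG x hx n).2)).2 := by
  show Function.update (seqG x hx n).2 (n + 1)
      (Classical.choose (exStep x hx n (seqG x hx n).1 (seqG x hx n).2)).2 (n + 1) = _
  simp

lemma lfun_pos (x : ℕ → X) (hx : LinearIndependent ℝ x) : ∀ n, 0 < lfun x hx n := by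
  intro n
  cases n with
  | zero => exact one_pos
  | succ n => rw [lfun_succ]; exact (seqG_step x hx n).2.1

lemma lxV (x : ℕ → X) (hx : LinearIndependent ℝ x) (n : ℕ) :
    lfun x hx (n + 1) • x (n + 1) ∈ Vn x hx (n + 1) := by
  rw [lfun_succ]
  exact (seqG_step x hx n).2.2.1

lemma seqG_agree (x : ℕ → X) (hx : LinearIndependent ℝ x) :
    ∀ n j, j ≤ n → (seqG x hx n).2 j = lfun x hx j := by
  intro n
  induction n with
  | zero => intro j hj; interval_cases j; rfl
  | succ n ih =>
    intro j hj
    rcases Nat.lt_or_ge j (n + 1) with h | h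
    · have hne : j ≠ n + 1 := by omega
      show Function.update (seqG x hx n).2 (n + 1) _ j = _
      rw [Function.update_of_ne hne]
      exact ih j (by omega)
    · have hj' : j = n + 1 := by omega
      subst hj'
      rfl

lemma key_sep (x : ℕ → X) (hx : LinearIndependent ℝ x) (n : ℕ) :
    Bset x n.unpair.1 n (lfun x hx) + Vn x hx (n + 1) + Vn x hx (n + 1) + Vn x hx (n + 1)
      ⊆ (Cset x n.unpair.1 n.unpair.2)ᶜ := by
  have h := (seqG_step x hx n).2.2.2
  rwa [Bset_congr x n.unpair.1 n (fun j hj => seqG_agree x hx n j (Finset.mem_Ioc.1 hj).2)] at h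

lemma tele (V : ℕ → Set X) (h0 : ∀ j, (0 : X) ∈ V j)
    (hVV : ∀ j, V (j + 1) + V (j + 1) ⊆ V j) (v : ℕ → X) (hv : ∀ j, v j ∈ V j) :
    ∀ d m N : ℕ, N ≤ m + d → (∑ j ∈ Finset.Ioc m N, v j) ∈ V m := by
  intro d
  induction d with
  | zero =>
    intro m N hN
    rw [Finset.Ioc_eq_empty (by omega), Finset.sum_empty]
    exact h0 m
  | succ d ih =>
    intro m N hN
    by_cases hmN : N ≤ m
    · rw [Finset.Ioc_eq_empty (by omega), Finset.sum_empty]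
      exact h0 m
    · push_neg at hmN
      have h1 : (∑ j ∈ Finset.Ioc m (m + 1), v j) + ∑ j ∈ Finset.Ioc (m + 1) N, v j
          = ∑ j ∈ Finset.Ioc m N, v j :=
        Finset.sum_Ioc_consecutive v (Nat.le_succ m) (by omega)
      rw [← h1, Nat.Ioc_succ_singleton, Finset.sum_singleton]
      exact hVV m (Set.add_mem_add (hv (m + 1)) (ih (m + 1) N (by omega)))

end Stmt0Aux

/-- In a Hausdorff topological vector space, every linearly independent
sequence can be rescaled by positive reals to become ℓ∞-independent. -/
theorem stmt0 {X : Type*} [AddCommGroup X] [Module ℝ X] [TopologicalSpace X]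
    [IsTopologicalAddGroup X] [ContinuousSMul ℝ X] [T2Space X]
    (x : ℕ → X) (hx : LinearIndependent ℝ x) :
    ∃ l : ℕ → ℝ, (∀ n, 0 < l n) ∧ LinftyIndep (fun n => l n • x n) := by
  classical
  open Stmt0Aux in
  refine ⟨Stmt0Aux.lfun x hx, Stmt0Aux.lfun_pos x hx, ?_⟩
  intro c hc hconv n0
  by_contra hn0
  set l := Stmt0Aux.lfun x hx with hldef
  obtain ⟨M₀, hM₀⟩ := hc
  have hex : ∃ j, c j ≠ 0 := ⟨n0, hn0⟩
  set k := Nat.find hex with hkdef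
  have hck : c k ≠ 0 := Nat.find_spec hex
  have hmin : ∀ j, j < k → c j = 0 := by
    intro j hj
    by_contra h
    exact Nat.find_min hex hj h
  set M := max M₀ 1 with hMdef
  have hM1 : (1 : ℝ) ≤ M := le_max_right _ _
  have hM0 : (0 : ℝ) < M := lt_of_lt_of_le one_pos hM1
  have hMc : ∀ j, |c j| ≤ M := fun j => le_trans (hM₀ j) (le_max_left _ _)
  have hlk : 0 < l k := Stmt0Aux.lfun_pos x hx k
  set a := |c k| * l k with hadef
  have ha : 0 < a := mul_pos (abs_pos.2 hck) hlk
  set m := Nat.ceil (max (M / a) (a / M)) with hmdef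
  have hm1 : a / M ≤ (m : ℝ) + 1 := by
    have := le_trans (le_max_right (M / a) (a / M)) (Nat.le_ceil _)
    linarith
  have hm2 : M / a ≤ (m : ℝ) + 1 := by
    have := le_trans (le_max_left (M / a) (a / M)) (Nat.le_ceil _)
    linarith
  have hm2' : 1 / ((m : ℝ) + 1) ≤ a / M := by
    have h1 : 1 / ((m : ℝ) + 1) ≤ 1 / (M / a) :=
      one_div_le_one_div_of_le (div_pos hM0 ha) hm2
    rwa [one_div_div] at h1
  -- the scheduled step
  set n := Nat.pair k m with hndef
  have hkn : k ≤ n := Nat.left_le_pair k m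
  have hsep := Stmt0Aux.key_sep x hx n
  rw [hndef] at hsep
  simp only [Nat.unpair_pair] at hsep
  rw [← hndef] at hsep
  -- convergence
  have hVmem := (Stmt0Aux.Vn_mem_bal x hx (n + 1)).1
  have hVbal := (Stmt0Aux.Vn_mem_bal x hx (n + 1)).2
  have hev : ∀ᶠ N in Filter.atTop,
      (∑ j ∈ Finset.range N, c j • (l j • x j)) ∈ Stmt0Aux.Vn x hx (n + 1) :=
    hconv.eventually_mem hVmem
  obtain ⟨N₁, hN₁⟩ := Filter.eventually_atTop.1 hev
  set N := max (n + 1) N₁ with hNdef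
  have hnN : n ≤ N := le_trans (Nat.le_succ n) (le_max_left _ _)
  have hnN' : n < N := lt_of_lt_of_le (Nat.lt_succ_self n) (le_max_left _ _)
  have hkN : k ≤ N := le_trans hkn hnN
  have hS : (∑ j ∈ Finset.range (N + 1), c j • (l j • x j)) ∈ Stmt0Aux.Vn x hx (n + 1) :=
    hN₁ _ (le_trans (le_max_right _ _) (Nat.le_succ N))
  set v : ℕ → X := fun j => ((c j / M) * l j) • x j with hvdef
  -- key identity
  have hid : (1 / M) • (∑ j ∈ Finset.range (N + 1), c j • (l j • x j))
      = ∑ j ∈ Finset.range (N + 1), v j := by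
    rw [Finset.smul_sum]
    refine Finset.sum_congr rfl fun j _ => ?_
    rw [smul_smul, smul_smul]
    congr 1
    ring
  have hzero : ∑ j ∈ Finset.range k, v j = 0 := by
    apply Finset.sum_eq_zero
    intro j hj
    have hcj : c j = 0 := hmin j (Finset.mem_range.1 hj)
    simp [hvdef, hcj]
  have hhead : ∑ j ∈ Finset.range (k + 1), v j = v k := by
    rw [Finset.sum_range_succ, hzero, zero_add]
  have hIco : Finset.Ico (k + 1) (N + 1) = Finset.Ioc k N := by
    ext j
    simp only [Finset.mem_Ico, Finset.mem_Ioc]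
    omega
  have hS' : (1 / M) • (∑ j ∈ Finset.range (N + 1), c j • (l j • x j))
      = v k + ∑ j ∈ Finset.Ioc k N, v j := by
    rw [hid, ← Finset.sum_range_add_sum_Ico v (show k + 1 ≤ N + 1 by omega), hhead, hIco]
  have hsplit2 : (∑ j ∈ Finset.Ioc k n, v j) + ∑ j ∈ Finset.Ioc n N, v j
      = ∑ j ∈ Finset.Ioc k N, v j := Finset.sum_Ioc_consecutive v hkn hnN
  have htail : (∑ j ∈ Finset.Ioc n N, v j)
      = v (n + 1) + ∑ j ∈ Finset.Ioc (n + 1) N, v j := by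
    rw [← Finset.sum_Ioc_consecutive v (Nat.le_succ n) (by omega),
      Nat.Ioc_succ_singleton, Finset.sum_singleton]
  -- memberships
  have hvV : ∀ j, v j ∈ Stmt0Aux.Vn x hx j := by
    intro j
    cases j with
    | zero => exact Set.mem_univ _
    | succ i =>
      have h1 : l (i + 1) • x (i + 1) ∈ Stmt0Aux.Vn x hx (i + 1) := Stmt0Aux.lxV x hx i
      have h2 : v (i + 1) = (c (i + 1) / M) • (l (i + 1) • x (i + 1)) := by
        rw [smul_smul]
      rw [h2]
      refine ((Stmt0Aux.Vn_mem_bal x hx (i + 1)).2).smul_mem ?_ h1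
      rw [Real.norm_eq_abs, abs_div, abs_of_pos hM0]
      rw [div_le_one hM0]
      exact hMc _
  have h0V : ∀ j, (0 : X) ∈ Stmt0Aux.Vn x hx j :=
    fun j => mem_of_mem_nhds (Stmt0Aux.Vn_mem_bal x hx j).1
  have hVV := fun j => (Stmt0Aux.seqG_step x hx j).1
  have hw₂ : (∑ j ∈ Finset.Ioc (n + 1) N, v j) ∈ Stmt0Aux.Vn x hx (n + 1) :=
    Stmt0Aux.tele _ h0V hVV v hvV N (n + 1) N (by omega)
  have hw₁ : v (n + 1) ∈ Stmt0Aux.Vn x hx (n + 1) := hvV (n + 1)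
  have hw₃ : (-(1 / M)) • (∑ j ∈ Finset.range (N + 1), c j • (l j • x j))
      ∈ Stmt0Aux.Vn x hx (n + 1) := by
    refine hVbal.smul_mem ?_ hS
    rw [Real.norm_eq_abs, abs_neg, abs_of_pos (by positivity)]
    rw [div_le_one hM0]
    exact hM1
  have hHead : (∑ j ∈ Finset.Ioc k n, v j) ∈ Stmt0Aux.Bset x k n l := by
    refine ⟨fun j => c j / M, fun j => ?_, rfl⟩
    rw [abs_div, abs_of_pos hM0, div_le_one hM0]
    exact hMc j
  -- assemble
  have hyeq : (-((c k / M) * l k)) • x k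
      = ((((∑ j ∈ Finset.Ioc k n, v j) + v (n + 1)) + ∑ j ∈ Finset.Ioc (n + 1) N, v j)
        + (-(1 / M)) • (∑ j ∈ Finset.range (N + 1), c j • (l j • x j))) := by
    have hvk : v k = ((c k / M) * l k) • x k := rfl
    rw [neg_smul, neg_smul, hS', ← hvk]
    have : (((∑ j ∈ Finset.Ioc k n, v j) + v (n + 1)) + ∑ j ∈ Finset.Ioc (n + 1) N, v j)
        = ∑ j ∈ Finset.Ioc k N, v j := by
      rw [add_assoc, ← htail, hsplit2]
    rw [this]
    abel
  have hyB := Set.add_mem_add (Set.add_mem_add (Set.add_mem_add hHead hw₁) hw₂) hw₃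
  rw [← hyeq] at hyB
  have hyC : (-((c k / M) * l k)) • x k ∈ Stmt0Aux.Cset x k m := by
    refine ⟨-((c k / M) * l k), ⟨?_, ?_⟩, rfl⟩
    · have habs : |(-((c k / M) * l k))| = a / M := by
        rw [abs_neg, abs_mul, abs_div, abs_of_pos hM0, abs_of_pos hlk, hadef]
        ring
      rw [habs]
      exact hm2'
    · have habs : |(-((c k / M) * l k))| = a / M := by
        rw [abs_neg, abs_mul, abs_div, abs_of_pos hM0, abs_of_pos hlk, hadef]
        ring
      rw [habs]
      exact hm1
  exact (hsep hyB) hyC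
end

section
/- Let X ≠ {0} be a Hausdorff topological vector space and A a nonempty subset of X. If (x_n) is an ℓ∞-independent sequence in X and A is [(x_n), S]-lineable for some infinite-dimensional subspace S of ℓ∞, then A is lineable. -/
open Filter Topology

/-- If (x n) is ℓ∞-independent in a Hausdorff TVS X ≠ {0} and a nonempty
set A is [(x n), S]-lineable for some infinite-dimensional subspace S of ℓ∞,
then A is lineable. -/
theorem stmt7 {X : Type*} [AddCommGroup X] [Module ℝ X] [TopologicalSpace X]
    [IsTopologicalAddGroup X] [ContinuousSMul ℝ X] [T2Space X] [Nontrivial X]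
    (A : Set X) (hA : A.Nonempty)
    (x : ℕ → X) (hx : LinftyIndep x)
    (S : Submodule ℝ (ℕ → ℝ)) (hSb : ∀ c ∈ S, BddSeq c)
    (hSdim : ¬ Module.Finite ℝ S)
    (hAS : ∀ c ∈ S, ∃ y ∈ A ∪ {0}, SeriesConvTo (fun n => c n • x n) y) :
    ∃ E : Submodule ℝ X, ¬ Module.Finite ℝ E ∧ (E : Set X) ⊆ A ∪ {0} := by
  classical
  choose g hg1 hg2 using hAS
  have hadd : ∀ c hc d hd, g (c + d) (S.add_mem hc hd) = g c hc + g d hd := by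
    intro c hc d hd
    refine tendsto_nhds_unique (hg2 (c + d) (S.add_mem hc hd)) ?_
    have := (hg2 c hc).add (hg2 d hd)
    simpa [SeriesConvTo, ← Finset.sum_add_distrib, add_smul] using this
  have hsmul : ∀ (a : ℝ) c hc, g (a • c) (S.smul_mem a hc) = a • g c hc := by
    intro a c hc
    refine tendsto_nhds_unique (hg2 (a • c) (S.smul_mem a hc)) ?_
    have := (hg2 c hc).const_smul a
    simpa [SeriesConvTo, Finset.smul_sum, smul_smul] using this
  let T : S →ₗ[ℝ] X :=
    { toFun := fun c => g c.1 c.2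
      map_add' := fun c d => hadd c.1 c.2 d.1 d.2
      map_smul' := fun a c => hsmul a c.1 c.2 }
  have hinj : Function.Injective T := by
    rw [← LinearMap.ker_eq_bot]
    rw [LinearMap.ker_eq_bot']
    intro c hc
    have h0 : SeriesConvTo (fun n => c.1 n • x n) 0 := by
      have := hg2 c.1 c.2
      rwa [show g c.1 c.2 = 0 from hc] at this
    have := hx c.1 (hSb c.1 c.2) h0
    ext n
    exact this n
  refine ⟨LinearMap.range T, ?_, ?_⟩
  · intro hfin
    exact hSdim (Module.Finite.equiv (LinearEquiv.ofInjective T hinj).symm)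
  · rintro y ⟨c, rfl⟩
    exact hg1 c.1 c.2
end

section
/- Let X be an infinite-dimensional normed space and (x_n) a linearly independent sequence in X with inf_n ‖x_n‖ > 0. Then for any subspace S of ℓ∞ properly containing c0, no subset A of X is [(x_n), S]-lineable; equivalently, there exists (c_n) ∈ S such that the series ∑_{n=1}^∞ c_n x_n does not converge in X. -/
open Filter Topology

/-- If a series converges, its terms tend to zero. -/
lemma terms_tendsto_zero {X : Type*} [NormedAddCommGroup X] (f : ℕ → X) (y : X)
    (h : SeriesConvTo f y) : Filter.Tendsto f Filter.atTop (nhds 0) := by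
  have h1 : Filter.Tendsto (fun N => ∑ n ∈ Finset.range (N + 1), f n)
      Filter.atTop (nhds y) := h.comp (tendsto_add_atTop_nat 1)
  have h2 := h1.sub h
  simpa [Finset.sum_range_succ] using h2

/-- In an infinite-dimensional normed space, if (x n) is linearly
independent with inf ‖x n‖ > 0 and S is a subspace of ℓ∞ properly containing c0,
then no subset of X is [(x n), S]-lineable; equivalently, some (c n) ∈ S gives a
divergent series ∑ c n • x n. -/
theorem stmt9 {X : Type*} [NormedAddCommGroup X] [NormedSpace ℝ X]
    (hX : ¬ FiniteDimensional ℝ X)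
    (x : ℕ → X) (hx : LinearIndependent ℝ x) (hinf : 0 < ⨅ n, ‖x n‖)
    (S : Submodule ℝ (ℕ → ℝ)) (hSb : ∀ c ∈ S, BddSeq c)
    (hc0 : ∀ c : ℕ → ℝ, Filter.Tendsto c Filter.atTop (nhds 0) → c ∈ S)
    (hproper : ∃ c ∈ S, ¬ Filter.Tendsto c Filter.atTop (nhds 0)) :
    (∀ A : Set X, ¬ ∀ c ∈ S, ∃ y ∈ A ∪ {0}, SeriesConvTo (fun n => c n • x n) y) ∧
    ∃ c ∈ S, ¬ ∃ y, SeriesConvTo (fun n => c n • x n) y := by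
  obtain ⟨c, hcS, hcnot⟩ := hproper
  have hbdd : BddBelow (Set.range fun n => ‖x n‖) :=
    ⟨0, by rintro r ⟨n, rfl⟩; exact norm_nonneg _⟩
  have hdiv : ¬ ∃ y, SeriesConvTo (fun n => c n • x n) y := by
    rintro ⟨y, hy⟩
    have hterms := terms_tendsto_zero _ _ hy
    -- so c n → 0, contradiction
    apply hcnot
    rw [Metric.tendsto_atTop] at hterms ⊢
    intro ε hε
    obtain ⟨N, hN⟩ := hterms (ε * (⨅ n, ‖x n‖)) (by positivity)
    refine ⟨N, fun n hn => ?_⟩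
    have h1 := hN n hn
    simp only [dist_zero_right, norm_smul, Real.norm_eq_abs] at h1 ⊢
    have h2 : (⨅ n, ‖x n‖) ≤ ‖x n‖ := ciInf_le hbdd n
    by_contra h3
    push_neg at h3
    have : ε * (⨅ n, ‖x n‖) ≤ |c n| * ‖x n‖ :=
      mul_le_mul h3 h2 (le_of_lt hinf) (le_trans hε.le h3)
    linarith
  refine ⟨fun A hA => ?_, c, hcS, hdiv⟩
  obtain ⟨y, _, hy⟩ := hA c hcS
  exact hdiv ⟨y, hy⟩
end
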